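/- arXiv:math/0603006 — 7 statements merged into one kernel-verified Lean document; each statement's English description precedes it below -/
import Mathlib

section
/- Let A : ℍ → ℍ be a nonzero ℝ-linear map. Then the following are equivalent: (1) A satisfies the angle identity and the determinant of A, regarded as a real-linear endomorphism of ℍ ≅ ℝ⁴, is positive; (2) there exist nonzero quaternions a, b such that A h = a * h * b for every h ∈ ℍ. (This is the pointwise, linear-algebraic content of the paper's Theorem 2.4 characterizing pseudoconformal maps of a quaternion variable.) -/
open scoped Quaternion
open Quaternion

noncomputable section StmtAux

def Bq : Module.Basis (Fin 4) ℝ ℍ[ℝ] := QuaternionAlgebra.basisOneIJK _ _ _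

theorem Bq_repr (q : ℍ[ℝ]) (m : Fin 4) : Bq.repr q m = ![q.re, q.imI, q.imJ, q.imK] m :=
  congrFun (QuaternionAlgebra.coe_basisOneIJK_repr (c₁ := (-1:ℝ)) (c₂ := (0:ℝ)) (c₃ := (-1:ℝ)) q) m

theorem Bq_comp (n : Fin 4) (m : Fin 4) :
    ![(Bq n).re, (Bq n).imI, (Bq n).imJ, (Bq n).imK] m = (Finsupp.single n (1:ℝ)) m := by
  rw [← Bq_repr, Module.Basis.repr_self]

def qmk (a b c d : ℝ) : ℍ[ℝ] := ⟨a, b, c, d⟩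
@[simp] theorem qmk_re (a b c d : ℝ) : (qmk a b c d).re = a := rfl
@[simp] theorem qmk_imI (a b c d : ℝ) : (qmk a b c d).imI = b := rfl
@[simp] theorem qmk_imJ (a b c d : ℝ) : (qmk a b c d).imJ = c := rfl
@[simp] theorem qmk_imK (a b c d : ℝ) : (qmk a b c d).imK = d := rfl

def iq : ℍ[ℝ] := qmk 0 1 0 0
def jq : ℍ[ℝ] := qmk 0 0 1 0
def kq : ℍ[ℝ] := qmk 0 0 0 1

theorem Bq0 : Bq 0 = (1 : ℍ[ℝ]) := by
  ext
  · simpa using Bq_comp 0 0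
  · simpa using Bq_comp 0 1
  · simpa using Bq_comp 0 2
  · simpa using Bq_comp 0 3
theorem Bq1 : Bq 1 = iq := by
  ext
  · simpa [iq, Finsupp.single_apply] using Bq_comp 1 0
  · simpa [iq] using Bq_comp 1 1
  · simpa [iq, Finsupp.single_apply] using Bq_comp 1 2
  · simpa [iq, Finsupp.single_apply] using Bq_comp 1 3
theorem Bq2 : Bq 2 = jq := by
  ext
  · simpa [jq, Finsupp.single_apply] using Bq_comp 2 0
  · simpa [jq, Finsupp.single_apply] using Bq_comp 2 1
  · simpa [jq] using Bq_comp 2 2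
  · simpa [jq, Finsupp.single_apply] using Bq_comp 2 3
theorem Bq3 : Bq 3 = kq := by
  ext
  · simpa [kq, Finsupp.single_apply] using Bq_comp 3 0
  · simpa [kq, Finsupp.single_apply] using Bq_comp 3 1
  · simpa [kq, Finsupp.single_apply] using Bq_comp 3 2
  · simpa [kq] using Bq_comp 3 3

theorem det_fin_four' {R : Type*} [CommRing R] (M : Matrix (Fin 4) (Fin 4) R) :
    M.det =
      M 0 0 * (M 1 1 * (M 2 2 * M 3 3 - M 2 3 * M 3 2) - M 1 2 * (M 2 1 * M 3 3 - M 2 3 * M 3 1) + M 1 3 * (M 2 1 * M 3 2 - M 2 2 * M 3 1))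
    - M 0 1 * (M 1 0 * (M 2 2 * M 3 3 - M 2 3 * M 3 2) - M 1 2 * (M 2 0 * M 3 3 - M 2 3 * M 3 0) + M 1 3 * (M 2 0 * M 3 2 - M 2 2 * M 3 0))
    + M 0 2 * (M 1 0 * (M 2 1 * M 3 3 - M 2 3 * M 3 1) - M 1 1 * (M 2 0 * M 3 3 - M 2 3 * M 3 0) + M 1 3 * (M 2 0 * M 3 1 - M 2 1 * M 3 0))
    - M 0 3 * (M 1 0 * (M 2 1 * M 3 2 - M 2 2 * M 3 1) - M 1 1 * (M 2 0 * M 3 2 - M 2 2 * M 3 0) + M 1 2 * (M 2 0 * M 3 1 - M 2 1 * M 3 0)) := by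
  simp [Matrix.det_succ_row_zero, Fin.sum_univ_succ,
    show ((1:Fin 4)).succAbove 2 = 3 by decide,
    show ((2:Fin 4)).succAbove 2 = 3 by decide,
    show ((3:Fin 4)).succAbove 2 = 2 by decide,
    show (2:Fin 3).succ = (3:Fin 4) by decide,
    show Fin.castSucc (2:Fin 3) = (2:Fin 4) by decide,
    show (1:Fin 2).succ = (2:Fin 3) by decide,
    show Fin.castSucc (1:Fin 2) = (1:Fin 3) by decide]
  ring

def mulLR (a b : ℍ[ℝ]) : ℍ[ℝ] →ₗ[ℝ] ℍ[ℝ] :=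
  (LinearMap.mulRight ℝ b).comp (LinearMap.mulLeft ℝ a)

theorem mulLR_apply (a b h : ℍ[ℝ]) : mulLR a b h = a * h * b := rfl

set_option maxHeartbeats 2000000 in
theorem det_mulLR (a b : ℍ[ℝ]) :
    LinearMap.det (mulLR a b) = (normSq a)^2 * (normSq b)^2 := by
  rw [← LinearMap.det_toMatrix Bq (mulLR a b), det_fin_four']
  simp only [LinearMap.toMatrix_apply, mulLR_apply, Bq0, Bq1, Bq2, Bq3, Bq_repr, iq, jq, kq, qmk_re, qmk_imI, qmk_imJ, qmk_imK]
  simp only [Quaternion.normSq_def', Quaternion.re_mul, Quaternion.imI_mul,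
    Quaternion.imJ_mul, Quaternion.imK_mul, Quaternion.re_one,
    Quaternion.imI_one, Quaternion.imJ_one, Quaternion.imK_one,
    Matrix.cons_val_zero, Matrix.cons_val_one, Matrix.head_cons, Matrix.cons_val_two,
    Matrix.tail_cons, Matrix.cons_val_three, qmk_re, qmk_imI, qmk_imJ, qmk_imK]
  ring

/-- The "reverser" linear map sending `k ↦ -k`, fixing `1, i, j`. -/
def Cmap : ℍ[ℝ] →ₗ[ℝ] ℍ[ℝ] where
  toFun h := qmk h.re h.imI h.imJ (-h.imK)
  map_add' x y := by ext <;> simp <;> ring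
  map_smul' r x := by ext <;> simp

set_option maxHeartbeats 1000000 in
theorem det_Cmap : LinearMap.det Cmap = -1 := by
  rw [← LinearMap.det_toMatrix Bq Cmap, det_fin_four']
  simp only [LinearMap.toMatrix_apply, Bq0, Bq1, Bq2, Bq3, Bq_repr, iq, jq, kq, Cmap,
    LinearMap.coe_mk, AddHom.coe_mk]
  norm_num [Quaternion.re_one, Quaternion.imI_one, Quaternion.imJ_one,
    Quaternion.imK_one, Matrix.cons_val_zero, Matrix.cons_val_one, Matrix.head_cons,
    Matrix.cons_val_two, Matrix.tail_cons, Matrix.cons_val_three]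

/-- real part of `x * star y` is the Euclidean inner product, in components. -/
theorem rs_comp (x y : ℍ[ℝ]) :
    (x * star y).re = x.re*y.re + x.imI*y.imI + x.imJ*y.imJ + x.imK*y.imK := by
  simp only [Quaternion.re_mul, Quaternion.re_star, Quaternion.imI_star, Quaternion.imJ_star,
    Quaternion.imK_star]; ring

theorem re_mul_comm (x y : ℍ[ℝ]) : (x * y).re = (y * x).re := by
  simp [Quaternion.re_mul]; ring

theorem star_of_im (x : ℍ[ℝ]) (hx : x.re = 0) : star x = -x := by
  ext <;> simp [hx]

theorem lin_eq_of_basis (f g : ℍ[ℝ] →ₗ[ℝ] ℍ[ℝ]) (h1 : f 1 = g 1) (hi : f iq = g iq)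
    (hj : f jq = g jq) (hk : f kq = g kq) : f = g := by
  apply Module.Basis.ext Bq
  intro m
  fin_cases m
  · rw [show ((⟨0, by norm_num⟩ : Fin 4)) = (0 : Fin 4) from rfl, Bq0]; exact h1
  · rw [show ((⟨1, by norm_num⟩ : Fin 4)) = (1 : Fin 4) from rfl, Bq1]; exact hi
  · rw [show ((⟨2, by norm_num⟩ : Fin 4)) = (2 : Fin 4) from rfl, Bq2]; exact hj
  · rw [show ((⟨3, by norm_num⟩ : Fin 4)) = (3 : Fin 4) from rfl, Bq3]; exact hk

theorem re_conj (a x : ℍ[ℝ]) : (a * x * star a).re = normSq a * x.re := by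
  rw [re_mul_comm, ← mul_assoc, Quaternion.star_mul_self, Quaternion.coe_mul_eq_smul]
  simp

end StmtAux

set_option maxHeartbeats 2000000 in
/-- The pointwise, linear-algebraic content of the paper's Theorem 2.4:
a nonzero `ℝ`-linear map `A : ℍ → ℍ` satisfies the angle identity and has positive
determinant (as a real-linear endomorphism of `ℍ ≅ ℝ⁴`) if and only if
`A h = a * h * b` for some nonzero quaternions `a`, `b`. -/
theorem stmt_0 (A : ℍ[ℝ] →ₗ[ℝ] ℍ[ℝ]) (hA : A ≠ 0) :
    ((∀ h₁ h₂ : ℍ[ℝ],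
        ((A h₁) * star (A h₂)).re * ‖h₁‖ * ‖h₂‖ =
          ‖A h₁‖ * ‖A h₂‖ * (h₁ * star h₂).re) ∧
      0 < LinearMap.det A) ↔
    ∃ a b : ℍ[ℝ], a ≠ 0 ∧ b ≠ 0 ∧ ∀ h : ℍ[ℝ], A h = a * h * b := by
  constructor
  · rintro ⟨hang, hdet⟩
    -- basic multiplication table
    have hii : iq * iq = (-1 : ℍ[ℝ]) := by
      ext <;> simp [iq, Quaternion.re_mul, Quaternion.imI_mul, Quaternion.imJ_mul,
        Quaternion.imK_mul]
    have hij : iq * jq = kq := by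
      ext <;> simp [iq, jq, kq, Quaternion.re_mul, Quaternion.imI_mul, Quaternion.imJ_mul,
        Quaternion.imK_mul]
    have hji : jq * iq = -kq := by
      ext <;> simp [iq, jq, kq, Quaternion.re_mul, Quaternion.imI_mul, Quaternion.imJ_mul,
        Quaternion.imK_mul]
    have hiqne : iq ≠ 0 := fun h => by simpa [iq] using congrArg QuaternionAlgebra.imI h
    have hjqne : jq ≠ 0 := fun h => by simpa [jq] using congrArg QuaternionAlgebra.imJ h
    have hkqne : kq ≠ 0 := fun h => by simpa [kq] using congrArg QuaternionAlgebra.imK h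
    -- orthogonality transfer
    have ortho : ∀ x y : ℍ[ℝ], x ≠ 0 → y ≠ 0 → (x * star y).re = 0 →
        ((A x) * star (A y)).re = 0 := by
      intro x y hx hy hxy
      have h := hang x y
      rw [hxy, mul_zero] at h
      have hx' : ‖x‖ ≠ 0 := norm_ne_zero_iff.mpr hx
      have hy' : ‖y‖ ≠ 0 := norm_ne_zero_iff.mpr hy
      rcases mul_eq_zero.mp h with h' | h'
      · rcases mul_eq_zero.mp h' with h'' | h''
        · exact h''
        · exact absurd h'' hx'
      · exact absurd h' hy'
    have ho10 : ((A iq) * star (A 1)).re = 0 := by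
      refine ortho iq 1 hiqne one_ne_zero ?_
      rw [rs_comp]; simp [iq]
    have ho20 : ((A jq) * star (A 1)).re = 0 := by
      refine ortho jq 1 hjqne one_ne_zero ?_
      rw [rs_comp]; simp [jq]
    have ho30 : ((A kq) * star (A 1)).re = 0 := by
      refine ortho kq 1 hkqne one_ne_zero ?_
      rw [rs_comp]; simp [kq]
    have ho12 : ((A iq) * star (A jq)).re = 0 := by
      refine ortho iq jq hiqne hjqne ?_
      rw [rs_comp]; simp [iq, jq]
    have ho13 : ((A iq) * star (A kq)).re = 0 := by
      refine ortho iq kq hiqne hkqne ?_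
      rw [rs_comp]; simp [iq, kq]
    have ho23 : ((A jq) * star (A kq)).re = 0 := by
      refine ortho jq kq hjqne hkqne ?_
      rw [rs_comp]; simp [jq, kq]
    -- equal norms
    have hsumdiff : ∀ x y : ℍ[ℝ], ((x + y) * star (x - y)).re = normSq x - normSq y := by
      intro x y
      rw [rs_comp, Quaternion.normSq_def', Quaternion.normSq_def']
      simp only [Quaternion.re_add, Quaternion.imI_add, Quaternion.imJ_add,
        Quaternion.imK_add, Quaternion.re_sub, Quaternion.imI_sub,
        Quaternion.imJ_sub, Quaternion.imK_sub]
      ring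
    have heqnorm : ∀ x : ℍ[ℝ], x.re = 0 → normSq x = 1 → normSq (A x) = normSq (A 1) := by
      intro x hxre hxn
      have h1 : (1 + x : ℍ[ℝ]) ≠ 0 := fun h => by
        simpa [hxre] using congrArg QuaternionAlgebra.re h
      have h2 : (1 - x : ℍ[ℝ]) ≠ 0 := fun h => by
        simpa [hxre] using congrArg QuaternionAlgebra.re h
      have h0 : ((A (1 + x)) * star (A (1 - x))).re = 0 := by
        refine ortho _ _ h1 h2 ?_
        rw [hsumdiff, hxn]
        simp
      rw [map_add, map_sub, hsumdiff] at h0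
      linarith only [h0]
    have hniq : normSq iq = 1 := by rw [Quaternion.normSq_def']; simp [iq]
    have hnjq : normSq jq = 1 := by rw [Quaternion.normSq_def']; simp [jq]
    have hnkq : normSq kq = 1 := by rw [Quaternion.normSq_def']; simp [kq]
    have hiqre : (iq).re = 0 := rfl
    have hjqre : (jq).re = 0 := rfl
    have hkqre : (kq).re = 0 := rfl
    have hn1 : normSq (A iq) = normSq (A 1) := heqnorm iq hiqre hniq
    have hn2 : normSq (A jq) = normSq (A 1) := heqnorm jq hjqre hnjq
    have hn3 : normSq (A kq) = normSq (A 1) := heqnorm kq hkqre hnkq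
    -- A 1 is nonzero
    have ha0 : A 1 ≠ 0 := by
      intro h0
      apply hA
      have z1 : A iq = 0 := by
        rw [← Quaternion.normSq_eq_zero, hn1, h0]; simp
      have z2 : A jq = 0 := by
        rw [← Quaternion.normSq_eq_zero, hn2, h0]; simp
      have z3 : A kq = 0 := by
        rw [← Quaternion.normSq_eq_zero, hn3, h0]; simp
      exact lin_eq_of_basis A 0 (by simpa using h0) (by simpa using z1)
        (by simpa using z2) (by simpa using z3)
    set a0 : ℍ[ℝ] := A 1 with ha0def
    set n : ℝ := normSq a0 with hndef
    have hnne : n ≠ 0 := Quaternion.normSq_ne_zero.mpr ha0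
    have hnpos : 0 < n := lt_of_le_of_ne Quaternion.normSq_nonneg (Ne.symm hnne)
    -- define p, q, r
    set p : ℍ[ℝ] := n⁻¹ • (A iq * star a0) with hpdef
    set q : ℍ[ℝ] := n⁻¹ • (A jq * star a0) with hqdef
    set r : ℍ[ℝ] := n⁻¹ • (A kq * star a0) with hrdef
    have hP : ∀ x : ℍ[ℝ], (n⁻¹ • (x * star a0)) * a0 = x := by
      intro x
      rw [smul_mul_assoc, mul_assoc, Quaternion.star_mul_self, Quaternion.mul_coe_eq_smul,
        smul_smul, inv_mul_cancel₀ hnne, one_smul]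
    have hpa0 : p * a0 = A iq := hP _
    have hqa0 : q * a0 = A jq := hP _
    have hra0 : r * a0 = A kq := hP _
    have hprod : ∀ x y : ℍ[ℝ],
        (n⁻¹ • (x * star a0)) * star (n⁻¹ • (y * star a0)) = n⁻¹ • (x * star y) := by
      intro x y
      have inner : (x * star a0) * (a0 * star y) = n • (x * star y) := by
        calc (x * star a0) * (a0 * star y)
            = x * ((star a0 * a0) * star y) := by
              rw [mul_assoc, ← mul_assoc (star a0)]
          _ = x * (((n : ℝ) : ℍ[ℝ]) * star y) := by rw [Quaternion.star_mul_self]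
          _ = n • (x * star y) := by rw [Quaternion.coe_mul_eq_smul, mul_smul_comm]
      calc (n⁻¹ • (x * star a0)) * star (n⁻¹ • (y * star a0))
          = (n⁻¹ • (x * star a0)) * (n⁻¹ • (a0 * star y)) := by
            rw [Quaternion.star_smul, star_mul, star_star]
        _ = (n⁻¹ * n⁻¹) • ((x * star a0) * (a0 * star y)) := by
            rw [smul_mul_smul_comm]
        _ = (n⁻¹ * n⁻¹) • (n • (x * star y)) := by rw [inner]
        _ = n⁻¹ • (x * star y) := by
            rw [smul_smul]
            congr 1
            field_simp
    -- facts about p q r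
    have hpre : p.re = 0 := by
      rw [hpdef, Quaternion.re_smul, smul_eq_mul, ho10, mul_zero]
    have hqre : q.re = 0 := by
      rw [hqdef, Quaternion.re_smul, smul_eq_mul, ho20, mul_zero]
    have hrre : r.re = 0 := by
      rw [hrdef, Quaternion.re_smul, smul_eq_mul, ho30, mul_zero]
    have hpq : (p * star q).re = 0 := by
      rw [hpdef, hqdef, hprod, Quaternion.re_smul, smul_eq_mul, ho12, mul_zero]
    have hpr : (p * star r).re = 0 := by
      rw [hpdef, hrdef, hprod, Quaternion.re_smul, smul_eq_mul, ho13, mul_zero]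
    have hqr : (q * star r).re = 0 := by
      rw [hqdef, hrdef, hprod, Quaternion.re_smul, smul_eq_mul, ho23, mul_zero]
    have hnormsq1 : ∀ x : ℍ[ℝ], normSq (A x) = n →
        normSq (n⁻¹ • (A x * star a0)) = 1 := by
      intro x hx
      rw [Quaternion.normSq_def, hprod, Quaternion.re_smul, smul_eq_mul,
        ← Quaternion.normSq_def, hx, inv_mul_cancel₀ hnne]
    have hpp : normSq p = 1 := by rw [hpdef]; exact hnormsq1 iq hn1
    have hqq : normSq q = 1 := by rw [hqdef]; exact hnormsq1 jq hn2
    have hrr : normSq r = 1 := by rw [hrdef]; exact hnormsq1 kq hn3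
    -- imaginary units square to -1
    have him : ∀ x : ℍ[ℝ], x.re = 0 → normSq x = 1 → x * x = -1 := by
      intro x h1 h2
      have hs : star x = -x := star_of_im x h1
      have h3 : x * star x = ((normSq x : ℝ) : ℍ[ℝ]) := Quaternion.self_mul_star x
      rw [hs, mul_neg, h2] at h3
      have h4 := neg_eq_iff_eq_neg.mp h3
      rw [h4]
      norm_num
    have hp2 : p * p = -1 := him p hpre hpp
    -- construct u₁ with u₁ * iq = p * u₁
    obtain ⟨u₁, hu1ne, hu1⟩ : ∃ u₁ : ℍ[ℝ], u₁ ≠ 0 ∧ u₁ * iq = p * u₁ := by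
      by_cases hpi : p = -iq
      · refine ⟨jq, hjqne, ?_⟩
        rw [hpi, hji, neg_mul, hij]
      · refine ⟨iq + p, fun h => hpi ?_, ?_⟩
        · exact eq_neg_of_add_eq_zero_right h
        · rw [add_mul, mul_add, hii, hp2]
          abel
    -- conjugated q
    set q' : ℍ[ℝ] := u₁⁻¹ * q * u₁ with hq'def
    have hconjre : ∀ (u x : ℍ[ℝ]), u ≠ 0 → (u⁻¹ * x * u).re = x.re := by
      intro u x hu
      rw [re_mul_comm, ← mul_assoc, mul_inv_cancel₀ hu, one_mul]
    have comp_i : ∀ x : ℍ[ℝ], (x * star iq).re = x.imI := by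
      intro x; rw [rs_comp]; simp [iq]
    have comp_j : ∀ x : ℍ[ℝ], (x * star jq).re = x.imJ := by
      intro x; rw [rs_comp]; simp [jq]
    have hq're : q'.re = 0 := by rw [hq'def, hconjre _ _ hu1ne, hqre]
    have him_mul_re : ∀ x y : ℍ[ℝ], y.re = 0 → (x * star y).re = 0 → (x * y).re = 0 := by
      intro x y hy h
      rw [star_of_im y hy, mul_neg] at h
      have h' : -((x * y).re) = 0 := by
        rw [← Quaternion.re_neg, h]
      linarith only [h']
    have hconj_im : ∀ (u x y z : ℍ[ℝ]), u ≠ 0 → u * y = z * u →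
        ((u⁻¹ * x * u) * y).re = (x * z).re := by
      intro u x y z hu huy
      calc ((u⁻¹ * x * u) * y).re = ((u⁻¹ * x) * (u * y)).re := by rw [mul_assoc]
        _ = ((u⁻¹ * x) * (z * u)).re := by rw [huy]
        _ = ((z * u) * (u⁻¹ * x)).re := re_mul_comm _ _
        _ = (z * ((u * u⁻¹) * x)).re := by rw [mul_assoc, ← mul_assoc u]
        _ = (z * x).re := by rw [mul_inv_cancel₀ hu, one_mul]
        _ = (x * z).re := re_mul_comm _ _
    have hq'imI : q'.imI = 0 := by
      have e : (q' * iq).re = (q * p).re := by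
        rw [hq'def]; exact hconj_im u₁ q iq p hu1ne hu1
      have e2 : (q * p).re = 0 :=
        him_mul_re q p hpre (by rw [rs_comp] at hpq ⊢; linarith only [hpq])
      rw [← comp_i q', star_of_im iq hiqre, mul_neg]
      simp [e, e2]
    have hq'n : normSq q' = 1 := by
      rw [hq'def, map_mul, map_mul, map_inv₀, hqq]
      field_simp [Quaternion.normSq_ne_zero.mpr hu1ne]
    set c : ℝ := q'.imJ with hcdef
    set s : ℝ := q'.imK with hsdef
    have hq'eq : q' = (qmk 0 0 c s) := by
      ext
      · exact hq're
      · exact hq'imI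
      · rfl
      · rfl
    have hc2s2 : c ^ 2 + s ^ 2 = 1 := by
      have h5 := hq'n
      rw [Quaternion.normSq_def', hq're, hq'imI] at h5
      simpa using h5
    -- construct u₂
    obtain ⟨u₂, hu2ne, hu2i, hu2j⟩ :
        ∃ u₂ : ℍ[ℝ], u₂ ≠ 0 ∧ u₂ * iq = iq * u₂ ∧ u₂ * jq = q' * u₂ := by
      by_cases hq'j : q' = -jq
      · refine ⟨iq, hiqne, rfl, ?_⟩
        rw [hq'j, hij, neg_mul, hji, neg_neg]
      · refine ⟨qmk (1 + c) s 0 0, fun h => hq'j ?_, ?_, ?_⟩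
        · have h1 : 1 + c = 0 := by simpa using congrArg QuaternionAlgebra.re h
          have h2 : s = 0 := by simpa using congrArg QuaternionAlgebra.imI h
          rw [hq'eq]
          ext <;> simp [jq, h2] <;> linarith only [h1]
        · ext <;> simp [iq, Quaternion.re_mul, Quaternion.imI_mul, Quaternion.imJ_mul,
            Quaternion.imK_mul] <;> ring
        · rw [hq'eq]
          ext <;> simp [jq, Quaternion.re_mul, Quaternion.imI_mul, Quaternion.imJ_mul,
            Quaternion.imK_mul] <;> linarith only [hc2s2]
    -- the final quaternion u
    set u : ℍ[ℝ] := u₁ * u₂ with hudef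
    have hune : u ≠ 0 := mul_ne_zero hu1ne hu2ne
    have hui : u * iq = p * u := by
      rw [hudef, mul_assoc, hu2i, ← mul_assoc, hu1, mul_assoc]
    have huj : u * jq = q * u := by
      rw [hudef, mul_assoc, hu2j, hq'def, ← mul_assoc]
      rw [show u₁ * (u₁⁻¹ * q * u₁) = q * u₁ by
        rw [← mul_assoc, ← mul_assoc, mul_inv_cancel₀ hu1ne, one_mul]]
      rw [mul_assoc]
    have huk : u * kq = p * (q * u) := by
      rw [← hij, ← mul_assoc, hui, mul_assoc, huj, ← mul_assoc, ← mul_assoc]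
    set b : ℍ[ℝ] := u⁻¹ * a0 with hbdef
    have hbne : b ≠ 0 := mul_ne_zero (inv_ne_zero hune) ha0
    have hub : u * b = a0 := by
      rw [hbdef, ← mul_assoc, mul_inv_cancel₀ hune, one_mul]
    have hB1 : u * 1 * b = A 1 := by rw [mul_one, hub]
    have hBi : u * iq * b = A iq := by
      rw [hui, mul_assoc, hub, hpa0]
    have hBj : u * jq * b = A jq := by
      rw [huj, mul_assoc, hub, hqa0]
    -- analyze r
    set r' : ℍ[ℝ] := u⁻¹ * r * u with hr'def
    have hr're : r'.re = 0 := by rw [hr'def, hconjre _ _ hune, hrre]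
    have hr'imI : r'.imI = 0 := by
      have e : (r' * iq).re = (r * p).re := by
        rw [hr'def]; exact hconj_im u r iq p hune hui
      have e2 : (r * p).re = 0 :=
        him_mul_re r p hpre (by rw [rs_comp] at hpr ⊢; linarith only [hpr])
      rw [← comp_i r', star_of_im iq hiqre, mul_neg]
      simp [e, e2]
    have hr'imJ : r'.imJ = 0 := by
      have e : (r' * jq).re = (r * q).re := by
        rw [hr'def]; exact hconj_im u r jq q hune huj
      have e2 : (r * q).re = 0 :=
        him_mul_re r q hqre (by rw [rs_comp] at hqr ⊢; linarith only [hqr])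
      rw [← comp_j r', star_of_im jq hjqre, mul_neg]
      simp [e, e2]
    have hr'n : normSq r' = 1 := by
      rw [hr'def, map_mul, map_mul, map_inv₀, hrr]
      field_simp [Quaternion.normSq_ne_zero.mpr hune]
    set t : ℝ := r'.imK with htdef
    have hr'eq : r' = (qmk 0 0 0 t) := by
      ext
      · exact hr're
      · exact hr'imI
      · exact hr'imJ
      · rfl
    have ht2 : t ^ 2 = 1 := by
      have h5 := hr'n
      rw [Quaternion.normSq_def', hr're, hr'imI, hr'imJ] at h5
      simpa using h5
    have hrr' : r = u * r' * u⁻¹ := by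
      rw [hr'def, ← mul_assoc u (u⁻¹ * r) u, ← mul_assoc u u⁻¹ r, mul_inv_cancel₀ hune,
        one_mul, mul_assoc r u u⁻¹, mul_inv_cancel₀ hune, mul_one]
    have ht : t = 1 ∨ t = -1 := by
      rcases mul_eq_zero.mp (show (t - 1) * (t + 1) = 0 by linear_combination ht2) with h | h
      · left; linarith only [h]
      · right; linarith only [h]
    rcases ht with ht | ht
    · -- r' = kq, good orientation
      have hrpq : u * kq * b = A kq := by
        have hr'k : r' = kq := by rw [hr'eq, ht]; ext <;> simp [kq]
        rw [← hra0, hrr', hr'k, mul_assoc (u * kq) u⁻¹ a0, ← hbdef]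
      have hAeq : A = mulLR u b :=
        lin_eq_of_basis A (mulLR u b) (by rw [mulLR_apply, hB1])
          (by rw [mulLR_apply, hBi]) (by rw [mulLR_apply, hBj]) (by rw [mulLR_apply, hrpq])
      exact ⟨u, b, hune, hbne, fun h => by rw [hAeq]; rfl⟩
    · -- r' = -kq, orientation reversed: contradiction with positive determinant
      exfalso
      have hr'k : r' = -kq := by rw [hr'eq, ht]; ext <;> simp [kq]
      have hrk : u * kq * b = -(A kq) := by
        rw [← hra0, hrr', hr'k, mul_neg, neg_mul, neg_mul, neg_neg,
          mul_assoc (u * kq) u⁻¹ a0, ← hbdef]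
      have hC1 : Cmap (1 : ℍ[ℝ]) = 1 := by ext <;> simp [Cmap]
      have hCi : Cmap iq = iq := by ext <;> simp [Cmap, iq]
      have hCj : Cmap jq = jq := by ext <;> simp [Cmap, jq]
      have hCk : Cmap kq = -kq := by ext <;> simp [Cmap, kq]
      have hAeq : A = (mulLR u b).comp Cmap := by
        refine lin_eq_of_basis _ _ ?_ ?_ ?_ ?_
        · rw [LinearMap.comp_apply, hC1, mulLR_apply, hB1]
        · rw [LinearMap.comp_apply, hCi, mulLR_apply, hBi]
        · rw [LinearMap.comp_apply, hCj, mulLR_apply, hBj]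
        · rw [LinearMap.comp_apply, hCk, map_neg, mulLR_apply, hrk, neg_neg]
      have hdetA : LinearMap.det A = -((normSq u)^2 * (normSq b)^2) := by
        rw [hAeq, LinearMap.det_comp, det_mulLR, det_Cmap]
        ring
      rw [hdetA] at hdet
      have h1 : 0 < normSq u := lt_of_le_of_ne Quaternion.normSq_nonneg
        (Ne.symm (Quaternion.normSq_ne_zero.mpr hune))
      have h2 : 0 < normSq b := lt_of_le_of_ne Quaternion.normSq_nonneg
        (Ne.symm (Quaternion.normSq_ne_zero.mpr hbne))
      have h3 : 0 < (normSq u)^2 * (normSq b)^2 := by positivity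
      linarith only [h3, hdet]
  · rintro ⟨a, b, ha, hb, hab⟩
    have hA_eq : A = mulLR a b :=
      LinearMap.ext fun h => (hab h).trans rfl
    constructor
    · intro h₁ h₂
      have e1 : A h₁ * star (A h₂) = normSq b • (a * (h₁ * star h₂) * star a) := by
        rw [hab, hab]
        calc (a * h₁ * b) * star (a * h₂ * b)
            = a * (h₁ * (b * star b) * star h₂) * star a := by
              simp only [star_mul, mul_assoc]
          _ = normSq b • (a * (h₁ * star h₂) * star a) := by
              rw [Quaternion.self_mul_star, Quaternion.mul_coe_eq_smul]
              simp [smul_mul_assoc, mul_smul_comm]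
      have e2 : (A h₁ * star (A h₂)).re = normSq b * (normSq a * (h₁ * star h₂).re) := by
        rw [e1]; simp only [Quaternion.re_smul, smul_eq_mul, re_conj]
      have e3 : ‖A h₁‖ = ‖a‖ * ‖h₁‖ * ‖b‖ := by rw [hab, norm_mul, norm_mul]
      have e4 : ‖A h₂‖ = ‖a‖ * ‖h₂‖ * ‖b‖ := by rw [hab, norm_mul, norm_mul]
      rw [e2, e3, e4, Quaternion.normSq_eq_norm_mul_self, Quaternion.normSq_eq_norm_mul_self]
      ring
    · rw [hA_eq, det_mulLR]
      have := Quaternion.normSq_ne_zero.mpr ha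
      have := Quaternion.normSq_ne_zero.mpr hb
      positivity
end

section
/- Every ℝ-linear isometry R of ℍ ≅ ℝ⁴ with determinant 1 has the form R x = a * x * b for some quaternions a, b with ‖a‖ = ‖b‖ = 1; conversely, for any unit quaternions a, b the map x ↦ a * x * b is an ℝ-linear isometry of ℍ with determinant 1. (This is the surjectivity of the map S³ × S³ → SO(4), (a,b) ↦ (x ↦ a x b), on which the proof of the paper's Theorem 2.4 rests.) -/
open scoped Quaternion
open Quaternion

noncomputable section Stmt1Aux

namespace Stmt1Aux

abbrev B : Module.Basis (Fin 4) ℝ ℍ[ℝ] := QuaternionAlgebra.basisOneIJK (-1 : ℝ) 0 (-1)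

lemma bval (q : ℍ[ℝ]) (i : Fin 4) : B.repr q i = ![q.re, q.imI, q.imJ, q.imK] i :=
  congrFun (QuaternionAlgebra.coe_basisOneIJK_repr _ _ _ q) i

@[simp] lemma idmk_re (a b c d : ℝ) : (@id ℍ[ℝ] ⟨a,b,c,d⟩).re = a := rfl
@[simp] lemma idmk_imI (a b c d : ℝ) : (@id ℍ[ℝ] ⟨a,b,c,d⟩).imI = b := rfl
@[simp] lemma idmk_imJ (a b c d : ℝ) : (@id ℍ[ℝ] ⟨a,b,c,d⟩).imJ = c := rfl
@[simp] lemma idmk_imK (a b c d : ℝ) : (@id ℍ[ℝ] ⟨a,b,c,d⟩).imK = d := rfl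

lemma bvec : (B 0 = (@id ℍ[ℝ] ⟨1,0,0,0⟩)) ∧ (B 1 = (@id ℍ[ℝ] ⟨0,1,0,0⟩))
    ∧ (B 2 = (@id ℍ[ℝ] ⟨0,0,1,0⟩)) ∧ (B 3 = (@id ℍ[ℝ] ⟨0,0,0,1⟩)) := by
  refine ⟨?_, ?_, ?_, ?_⟩ <;>
  · apply B.repr.injective
    refine Finsupp.ext fun i => ?_
    rw [Module.Basis.repr_self, bval]
    fin_cases i <;> simp [Finsupp.single_apply]

/-- Quaternion conjugation as an `ℝ`-linear map. -/
def starLin : ℍ[ℝ] →ₗ[ℝ] ℍ[ℝ] where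
  toFun := star
  map_add' := star_add
  map_smul' r x := by simp

lemma matL (a : ℍ[ℝ]) : LinearMap.toMatrix B B (LinearMap.mulLeft ℝ a) =
    !![a.re, -a.imI, -a.imJ, -a.imK;
       a.imI, a.re, -a.imK, a.imJ;
       a.imJ, a.imK, a.re, -a.imI;
       a.imK, -a.imJ, a.imI, a.re] := by
  obtain ⟨h0, h1, h2, h3⟩ := bvec
  ext i j
  fin_cases j <;> rw [LinearMap.toMatrix_apply] <;>
    simp only [h0, h1, h2, h3, LinearMap.mulLeft_apply, bval] <;>
    fin_cases i <;>
    simp [h0, h1, h2, h3, Quaternion.re_mul, Quaternion.imI_mul, Quaternion.imJ_mul,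
      Quaternion.imK_mul]

lemma matR (b : ℍ[ℝ]) : LinearMap.toMatrix B B (LinearMap.mulRight ℝ b) =
    !![b.re, -b.imI, -b.imJ, -b.imK;
       b.imI, b.re, b.imK, -b.imJ;
       b.imJ, -b.imK, b.re, b.imI;
       b.imK, b.imJ, -b.imI, b.re] := by
  obtain ⟨h0, h1, h2, h3⟩ := bvec
  ext i j
  fin_cases j <;> rw [LinearMap.toMatrix_apply] <;>
    simp only [h0, h1, h2, h3, LinearMap.mulRight_apply, bval] <;>
    fin_cases i <;>
    simp [h0, h1, h2, h3, Quaternion.re_mul, Quaternion.imI_mul, Quaternion.imJ_mul,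
      Quaternion.imK_mul]

lemma matC : LinearMap.toMatrix B B starLin =
    !![1, 0, 0, 0; 0, -1, 0, 0; 0, 0, -1, 0; 0, 0, 0, -1] := by
  obtain ⟨h0, h1, h2, h3⟩ := bvec
  ext i j
  fin_cases j <;> rw [LinearMap.toMatrix_apply] <;>
    simp only [h0, h1, h2, h3, starLin, LinearMap.coe_mk, AddHom.coe_mk, bval] <;>
    fin_cases i <;>
    simp [h0, h1, h2, h3, Matrix.vecHead, Matrix.vecTail]

lemma detL (a : ℍ[ℝ]) : LinearMap.det (LinearMap.mulLeft ℝ a) = normSq a ^ 2 := by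
  have h2 : Matrix.det (LinearMap.toMatrix B B (LinearMap.mulLeft ℝ a)) = normSq a ^ 2 := by
    rw [matL]
    simp [Matrix.det_succ_row_zero, Fin.sum_univ_succ, Fin.succAbove, Fin.castSucc, Fin.succ,
      Fin.castAdd, Fin.castLE, Quaternion.normSq_def']
    ring
  exact (LinearMap.det_toMatrix B _).symm.trans h2

lemma detR (b : ℍ[ℝ]) : LinearMap.det (LinearMap.mulRight ℝ b) = normSq b ^ 2 := by
  have h2 : Matrix.det (LinearMap.toMatrix B B (LinearMap.mulRight ℝ b)) = normSq b ^ 2 := by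
    rw [matR]
    simp [Matrix.det_succ_row_zero, Fin.sum_univ_succ, Fin.succAbove, Fin.castSucc, Fin.succ,
      Fin.castAdd, Fin.castLE, Quaternion.normSq_def']
    ring
  exact (LinearMap.det_toMatrix B _).symm.trans h2

lemma detC : LinearMap.det starLin = -1 := by
  have h2 : Matrix.det (LinearMap.toMatrix B B starLin) = -1 := by
    rw [matC]
    simp [Matrix.det_succ_row_zero, Fin.sum_univ_succ, Fin.succAbove, Fin.castSucc, Fin.succ,
      Fin.castAdd, Fin.castLE]
  exact (LinearMap.det_toMatrix B _).symm.trans h2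

lemma normSq_of_norm_one {a : ℍ[ℝ]} (ha : ‖a‖ = 1) : normSq a = 1 := by
  rw [Quaternion.normSq_eq_norm_mul_self, ha, one_mul]

lemma mul_star_self_of {a : ℍ[ℝ]} (ha : ‖a‖ = 1) : a * star a = 1 := by
  rw [Quaternion.self_mul_star, normSq_of_norm_one ha, Quaternion.coe_one]

lemma star_mul_self_of {a : ℍ[ℝ]} (ha : ‖a‖ = 1) : star a * a = 1 := by
  rw [Quaternion.star_mul_self, normSq_of_norm_one ha, Quaternion.coe_one]

lemma det_plain (a b : ℍ[ℝ]) (R : ℍ[ℝ] →ₗ[ℝ] ℍ[ℝ]) (h : ∀ x, R x = a * x * b) :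
    LinearMap.det R = normSq a ^ 2 * normSq b ^ 2 := by
  have hR : R = (LinearMap.mulLeft ℝ a).comp (LinearMap.mulRight ℝ b) := by
    refine LinearMap.ext fun x => ?_
    simp [h x, mul_assoc]
  rw [hR, LinearMap.det_comp, detL, detR]

lemma det_conj (a b : ℍ[ℝ]) (R : ℍ[ℝ] →ₗ[ℝ] ℍ[ℝ]) (h : ∀ x, R x = a * star x * b) :
    LinearMap.det R = -(normSq a ^ 2 * normSq b ^ 2) := by
  have hR : R = (LinearMap.mulLeft ℝ a).comp ((LinearMap.mulRight ℝ b).comp starLin) := by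
    refine LinearMap.ext fun x => ?_
    simp [h x, starLin, mul_assoc]
  rw [hR, LinearMap.det_comp, LinearMap.det_comp, detL, detR, detC]; ring

/-- The key quaternion identity behind the reflection formula. -/
lemma key_identity {u : ℍ[ℝ]} (hu : ‖u‖ = 1) (x : ℍ[ℝ]) :
    u * star x * u = (2 * (inner ℝ u x : ℝ)) • u - x := by
  have h1 : u * star x + x * star u = (((2 * (inner ℝ u x : ℝ)) : ℝ) : ℍ[ℝ]) := by
    rw [Quaternion.inner_def]
    have h := Quaternion.self_add_star' (u * star x)
    simpa [star_mul, star_star] using h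
  calc u * star x * u = (u * star x + x * star u) * u - x * (star u * u) := by
        noncomm_ring
    _ = (((2 * (inner ℝ u x : ℝ)) : ℝ) : ℍ[ℝ]) * u - x * 1 := by
        rw [h1, star_mul_self_of hu]
    _ = (2 * (inner ℝ u x : ℝ)) • u - x := by
        rw [Quaternion.coe_mul_eq_smul, mul_one]

lemma refl_eq {v : ℍ[ℝ]} (hv : v ≠ 0) (x : ℍ[ℝ]) :
    Submodule.reflection (ℝ ∙ v)ᗮ x = -(‖v‖⁻¹ • v) * star x * (‖v‖⁻¹ • v) := by
  set u : ℍ[ℝ] := ‖v‖⁻¹ • v with hu_def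
  have hvn : ‖v‖ ≠ 0 := norm_ne_zero_iff.mpr hv
  have hu : ‖u‖ = 1 := by
    rw [hu_def, norm_smul, norm_inv, norm_norm, inv_mul_cancel₀ hvn]
  have hkey2 : ((inner ℝ v x : ℝ) / (‖v‖:ℝ)^2) • v = (inner ℝ u x : ℝ) • u := by
    rw [hu_def, real_inner_smul_left, smul_smul]
    congr 1
    field_simp
  have h : -u * star x * u = -(u * star x * u) := by noncomm_ring
  rw [Submodule.reflection_orthogonal_apply, Submodule.reflection_singleton_apply,
    RCLike.ofReal_real_eq_id, id_eq, hkey2, h, key_identity hu x]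
  module

/-- Predicate: `φ` has one of the two forms `x ↦ a x b` or `x ↦ a x̄ b`. -/
def P (φ : ℍ[ℝ] ≃ₗᵢ[ℝ] ℍ[ℝ]) : Prop := ∃ a b : ℍ[ℝ], ‖a‖ = 1 ∧ ‖b‖ = 1 ∧
  ((∀ x, φ x = a * x * b) ∨ (∀ x, φ x = a * star x * b))

lemma P_all (φ : ℍ[ℝ] ≃ₗᵢ[ℝ] ℍ[ℝ]) : P φ := by
  have hφ : φ ∈ Subgroup.closure
      (Set.range fun v : ℍ[ℝ] => Submodule.reflection (ℝ ∙ v)ᗮ) := by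
    rw [LinearIsometryEquiv.reflections_generate]; trivial
  refine Subgroup.closure_induction ?_ ?_ ?_ ?_ hφ
  · -- generators
    rintro _ ⟨v, rfl⟩
    show P (Submodule.reflection (ℝ ∙ v)ᗮ)
    by_cases hv : v = 0
    · subst hv
      refine ⟨1, 1, norm_one, norm_one, Or.inl fun x => ?_⟩
      have hx : x ∈ (ℝ ∙ (0 : ℍ[ℝ]))ᗮ := by
        intro w hw
        rw [Submodule.span_zero_singleton] at hw
        simp [(Submodule.mem_bot ℝ).mp hw]
      rw [Submodule.reflection_mem_subspace_eq_self hx, one_mul, mul_one]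
    · set u : ℍ[ℝ] := ‖v‖⁻¹ • v with hu_def
      have hvn : ‖v‖ ≠ 0 := norm_ne_zero_iff.mpr hv
      have hu : ‖u‖ = 1 := by
        rw [hu_def, norm_smul, norm_inv, norm_norm, inv_mul_cancel₀ hvn]
      have hspan : (ℝ ∙ v) = ℝ ∙ u := by
        rw [hu_def]
        exact (Submodule.span_singleton_smul_eq (IsUnit.mk0 _ (inv_ne_zero hvn)) v).symm
      refine ⟨-u, u, by rw [norm_neg]; exact hu, hu, Or.inr fun x => ?_⟩
      rw [refl_eq hv x, ← hu_def]
  · -- identity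
    exact ⟨1, 1, norm_one, norm_one, Or.inl fun x => by simp⟩
  · -- multiplication
    rintro φ ψ _ _ ⟨a, b, ha, hb, hf⟩ ⟨c, d, hc, hd, hg⟩
    have hmul : ∀ x, (φ * ψ) x = φ (ψ x) := fun x => rfl
    rcases hf with hf | hf <;> rcases hg with hg | hg
    · exact ⟨a * c, d * b, by simp [norm_mul, ha, hc], by simp [norm_mul, hd, hb],
        Or.inl fun x => by rw [hmul, hg, hf]; simp [mul_assoc]⟩
    · exact ⟨a * c, d * b, by simp [norm_mul, ha, hc], by simp [norm_mul, hd, hb],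
        Or.inr fun x => by rw [hmul, hg, hf]; simp [mul_assoc]⟩
    · exact ⟨a * star d, star c * b, by simp [norm_mul, Quaternion.norm_star, ha, hd],
        by simp [norm_mul, Quaternion.norm_star, hc, hb],
        Or.inr fun x => by rw [hmul, hg, hf]; simp [star_mul, mul_assoc]⟩
    · exact ⟨a * star d, star c * b, by simp [norm_mul, Quaternion.norm_star, ha, hd],
        by simp [norm_mul, Quaternion.norm_star, hc, hb],
        Or.inl fun x => by rw [hmul, hg, hf]; simp [star_mul, star_star, mul_assoc]⟩
  · -- inverse
    rintro φ _ ⟨a, b, ha, hb, hf⟩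
    have hinv : ∀ y, φ⁻¹ y = φ.symm y := fun y => rfl
    rcases hf with hf | hf
    · refine ⟨star a, star b, by rw [Quaternion.norm_star]; exact ha, by rw [Quaternion.norm_star]; exact hb,
        Or.inl fun y => ?_⟩
      rw [hinv]
      apply φ.injective
      rw [φ.apply_symm_apply, hf]
      symm
      calc a * (star a * y * star b) * b = (a * star a) * y * (star b * b) := by
            simp [mul_assoc]
        _ = y := by rw [mul_star_self_of ha, star_mul_self_of hb, one_mul, mul_one]
    · refine ⟨b, a, hb, ha, Or.inr fun y => ?_⟩
      rw [hinv]
      apply φ.injective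
      rw [φ.apply_symm_apply, hf]
      symm
      calc a * star (b * star y * a) * b = (a * star a) * y * (star b * b) := by
            simp [star_mul, star_star, mul_assoc]
        _ = y := by rw [mul_star_self_of ha, star_mul_self_of hb, one_mul, mul_one]

end Stmt1Aux

end Stmt1Aux

/-- Surjectivity of `S³ × S³ → SO(4)`, `(a,b) ↦ (x ↦ a x b)`:
an `ℝ`-linear map `R : ℍ → ℍ` is a norm-preserving map with determinant `1` if and
only if `R x = a * x * b` for some unit quaternions `a`, `b`. -/
theorem stmt_1 (R : ℍ[ℝ] →ₗ[ℝ] ℍ[ℝ]) :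
    ((∀ x : ℍ[ℝ], ‖R x‖ = ‖x‖) ∧ LinearMap.det R = 1) ↔
    ∃ a b : ℍ[ℝ], ‖a‖ = 1 ∧ ‖b‖ = 1 ∧ ∀ x : ℍ[ℝ], R x = a * x * b := by
  constructor
  · rintro ⟨hnorm, hdet⟩
    have hinner := (LinearMap.norm_map_iff_inner_map_map (𝕜 := ℝ) R).mp hnorm
    have hinj : Function.Injective R := by
      intro x y hxy
      have h0 : ‖x - y‖ = 0 := by rw [← hnorm, map_sub, hxy, sub_self, norm_zero]
      exact sub_eq_zero.mp (norm_eq_zero.mp h0)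
    have hsurj : Function.Surjective R := LinearMap.injective_iff_surjective.mp hinj
    let e : ℍ[ℝ] ≃ₗ[ℝ] ℍ[ℝ] := LinearEquiv.ofBijective R ⟨hinj, hsurj⟩
    let φ : ℍ[ℝ] ≃ₗᵢ[ℝ] ℍ[ℝ] := e.isometryOfInner fun x y => hinner x y
    have hφR : ∀ x, φ x = R x := fun x => rfl
    obtain ⟨a, b, ha, hb, hcase⟩ := Stmt1Aux.P_all φ
    rcases hcase with h | h
    · exact ⟨a, b, ha, hb, fun x => by rw [← hφR x, h x]⟩
    · exfalso
      have hform : ∀ x, R x = a * star x * b := fun x => by rw [← hφR x, h x]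
      have hd := Stmt1Aux.det_conj a b R hform
      rw [hdet, Stmt1Aux.normSq_of_norm_one ha, Stmt1Aux.normSq_of_norm_one hb] at hd
      norm_num at hd
  · rintro ⟨a, b, ha, hb, h⟩
    refine ⟨fun x => by rw [h x]; simp [norm_mul, ha, hb], ?_⟩
    rw [Stmt1Aux.det_plain a b R h, Stmt1Aux.normSq_of_norm_one ha,
      Stmt1Aux.normSq_of_norm_one hb]
    norm_num
end

section
/- Let U ⊆ ℍ be open and let f : U → ℍ be continuously differentiable over ℝ on U and pseudoconformal at every point of U. Then f(U) is open in ℍ; if in addition U is connected, then f(U) is a domain, i.e. a nonempty open connected subset of ℍ. (Paper's Theorem 2.30.) -/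
open scoped Quaternion

/-- `f` is pseudoconformal at `ξ`: it is Fréchet differentiable over `ℝ` at `ξ` and
its derivative has the form `h ↦ a * h * b` with nonzero quaternions `a`, `b`. -/
def Pseudoconformal (f : ℍ[ℝ] → ℍ[ℝ]) (ξ : ℍ[ℝ]) : Prop :=
  ∃ (A : ℍ[ℝ] →L[ℝ] ℍ[ℝ]) (a b : ℍ[ℝ]), a ≠ 0 ∧ b ≠ 0 ∧
    HasFDerivAt f A ξ ∧ ∀ h : ℍ[ℝ], A h = a * h * b

/-- Paper's Theorem 2.30: the image of an open set under a `C¹` pseudoconformal map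
is open, and the image of a domain is a domain. -/
theorem stmt_5 (U : Set ℍ[ℝ]) (hU : IsOpen U) (f : ℍ[ℝ] → ℍ[ℝ])
    (hf1 : ContDiffOn ℝ 1 f U) (hf : ∀ ξ ∈ U, Pseudoconformal f ξ) :
    IsOpen (f '' U) ∧ (IsConnected U → IsConnected (f '' U)) := by
  constructor
  · rw [isOpen_iff_mem_nhds]
    rintro y ⟨ξ, hξ, rfl⟩
    obtain ⟨A, a, b, ha, hb, hderiv, hA⟩ := hf ξ hξ
    -- inverse continuous linear map
    set B : ℍ[ℝ] →L[ℝ] ℍ[ℝ] := ContinuousLinearMap.mulLeftRight ℝ ℍ[ℝ] a⁻¹ b⁻¹ with hB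
    have hBA : ∀ x, B (A x) = x := by
      intro x
      simp only [hB, hA, ContinuousLinearMap.mulLeftRight_apply]
      calc a⁻¹ * (a * x * b) * b⁻¹ = (a⁻¹ * a) * x * (b * b⁻¹) := by noncomm_ring
        _ = x := by rw [inv_mul_cancel₀ ha, mul_inv_cancel₀ hb, one_mul, mul_one]
    have hAB : ∀ x, A (B x) = x := by
      intro x
      simp only [hB, hA, ContinuousLinearMap.mulLeftRight_apply]
      calc a * (a⁻¹ * x * b⁻¹) * b = (a * a⁻¹) * x * (b⁻¹ * b) := by noncomm_ring
        _ = x := by rw [mul_inv_cancel₀ ha, inv_mul_cancel₀ hb, one_mul, mul_one]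
    let E : ℍ[ℝ] ≃L[ℝ] ℍ[ℝ] := ContinuousLinearEquiv.equivOfInverse A B hBA hAB
    have hEA : (E : ℍ[ℝ] →L[ℝ] ℍ[ℝ]) = A := rfl
    have hstrict : HasStrictFDerivAt f (E : ℍ[ℝ] →L[ℝ] ℍ[ℝ]) ξ := by
      rw [hEA]
      exact (hf1.contDiffAt (hU.mem_nhds hξ)).hasStrictFDerivAt one_ne_zero
        |>.congr_fderiv (hderiv.unique
          ((hf1.contDiffAt (hU.mem_nhds hξ)).hasStrictFDerivAt one_ne_zero).hasFDerivAt).symm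
    have hmap : Filter.map f (nhds ξ) = nhds (f ξ) :=
      hstrict.map_nhds_eq_of_equiv
    rw [← hmap]
    exact Filter.image_mem_map (hU.mem_nhds hξ)
  · intro hconn
    exact hconn.image f hf1.continuousOn
end

section
/- For all E, D ∈ ℝ, J ∈ ℍ and every nonzero z ∈ ℍ: z ∈ S(E, J, D) if and only if z⁻¹ ∈ S(D, star J, E). Consequently the quaternion inversion z ↦ z⁻¹ maps S(E, J, D) ∖ {0} bijectively onto S(D, star J, E) ∖ {0}, i.e. it carries hyperspheres and real hyperplanes of ℍ to hyperspheres and real hyperplanes. (The inversion case of the paper's Theorem 2.33.) -/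
open scoped Quaternion

/-- The hypersphere (`E ≠ 0`) or real hyperplane (`E = 0`) of `ℍ ≅ ℝ⁴` with
equation `E * ‖z‖² + 2 * re (J * star z) + D = 0`. -/
def Ssphere (E : ℝ) (J : ℍ[ℝ]) (D : ℝ) : Set ℍ[ℝ] :=
  {z : ℍ[ℝ] | E * ‖z‖ ^ 2 + 2 * (J * star z).re + D = 0}

lemma key (E D : ℝ) (J : ℍ[ℝ]) (z : ℍ[ℝ]) (hz : z ≠ 0) :
    z ∈ Ssphere E J D ↔ z⁻¹ ∈ Ssphere D (star J) E := by
  have hn : Quaternion.normSq z ≠ 0 := Quaternion.normSq_ne_zero.2 hz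
  have hsq : ∀ w : ℍ[ℝ], ‖w‖ ^ 2 = Quaternion.normSq w := fun w => by
    rw [sq, ← Quaternion.normSq_eq_norm_mul_self]
  have hre : (star J * z).re = (J * star z).re := by
    simp [Quaternion.re_mul]
  have hstarinv : star z⁻¹ = (Quaternion.normSq z)⁻¹ • z := by
    rw [star_inv₀, Quaternion.inv_def]
    simp [Quaternion.normSq_star]
  simp only [Ssphere, Set.mem_setOf_eq, hsq, Quaternion.normSq_inv, hstarinv,
    mul_smul_comm, Quaternion.re_smul, smul_eq_mul, hre]
  set r := (J * star z).re with hr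
  constructor
  · intro h
    field_simp
    linarith
  · intro h
    field_simp at h
    linarith

/-- Inversion case of the paper's Theorem 2.33: quaternion inversion carries
hyperspheres and real hyperplanes to hyperspheres and real hyperplanes. -/
theorem stmt_6 (E D : ℝ) (J : ℍ[ℝ]) :
    (∀ z : ℍ[ℝ], z ≠ 0 → (z ∈ Ssphere E J D ↔ z⁻¹ ∈ Ssphere D (star J) E)) ∧
    Set.BijOn (fun z : ℍ[ℝ] => z⁻¹)
      (Ssphere E J D \ {0}) (Ssphere D (star J) E \ {0}) := by
  refine ⟨key E D J, ?_, ?_, ?_⟩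
  · rintro z ⟨hzS, hz0⟩
    have hz : z ≠ 0 := by simpa using hz0
    exact ⟨(key E D J z hz).1 hzS, by simpa using inv_ne_zero hz⟩
  · intro a _ b _ h
    exact inv_injective h
  · rintro w ⟨hwS, hw0⟩
    have hw : w ≠ 0 := by simpa using hw0
    have h2 := (key D E (star J) w hw).1
    rw [star_star] at h2
    exact ⟨w⁻¹, ⟨h2 hwS, by simpa using inv_ne_zero hw⟩, inv_inv w⟩
end

section
/- Let a, b ∈ ℍ be nonzero, E, D ∈ ℝ and J ∈ ℍ. Then for every z ∈ ℍ: z ∈ S(E, J, D) if and only if a * z * b ∈ S(E, a * J * b, ‖a‖² * ‖b‖² * D). In particular the maps z ↦ a z b carry hyperspheres and real hyperplanes of ℍ to hyperspheres and real hyperplanes. (The rotation–dilation case of the paper's Theorem 2.33.) -/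
open scoped Quaternion

/-!
Since `re (x * star y)` is the inner product on `ℍ`, and `b * star b = ‖b‖²` is a central real
scalar, `z ↦ a z b` multiplies both `‖z‖²` and `re (J * star z)` by `‖a‖² ‖b‖²`. The equation of
the image sphere is therefore the equation of the original one multiplied by the nonzero
factor `‖a‖² ‖b‖²`.
-/

namespace Quaternion

variable {R : Type*} [CommRing R]

theorem re_mul_comm (x y : ℍ[R]) : (x * y).re = (y * x).re := by
  simp only [re_mul]
  ring

theorem re_mul_mul_star (a w : ℍ[R]) : (a * w * star a).re = normSq a * w.re := by
  rw [re_mul_comm, ← mul_assoc, star_mul_self, coe_mul_eq_smul, re_smul, smul_eq_mul]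

theorem re_mul_mul_mul_star_mul_mul (a b x y : ℍ[R]) :
    (a * x * b * star (a * y * b)).re = normSq a * normSq b * (x * star y).re := by
  have hcentral : a * x * b * star (a * y * b) = a * (↑(normSq b) * (x * star y)) * star a := by
    calc a * x * b * star (a * y * b) = a * (x * (b * star b) * star y) * star a := by
          simp only [star_mul, mul_assoc]
      _ = a * (↑(normSq b) * (x * star y)) * star a := by
          rw [self_mul_star, ← coe_commutes]; simp only [mul_assoc]
  rw [hcentral, re_mul_mul_star, coe_mul_eq_smul, re_smul, smul_eq_mul, mul_assoc]

end Quaternion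

theorem mem_Ssphere_mul_mul_iff (a b z : ℍ[ℝ]) (E D : ℝ) (J : ℍ[ℝ]) :
    a * z * b ∈ Ssphere E (a * J * b) (‖a‖ ^ 2 * ‖b‖ ^ 2 * D) ↔
      ‖a‖ ^ 2 * ‖b‖ ^ 2 * (E * ‖z‖ ^ 2 + 2 * (J * star z).re + D) = 0 := by
  rw [Ssphere, Set.mem_ofPred_eq, Quaternion.re_mul_mul_mul_star_mul_mul,
    Quaternion.normSq_eq_norm_mul_self, Quaternion.normSq_eq_norm_mul_self, norm_mul, norm_mul]
  ring_nf

/-- Rotation–dilation case of the paper's Theorem 2.33: the maps `z ↦ a z b` carry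
hyperspheres and real hyperplanes to hyperspheres and real hyperplanes. -/
theorem stmt_7 (a b : ℍ[ℝ]) (ha : a ≠ 0) (hb : b ≠ 0) (E D : ℝ) (J : ℍ[ℝ]) :
    ∀ z : ℍ[ℝ], z ∈ Ssphere E J D ↔
      a * z * b ∈ Ssphere E (a * J * b) (‖a‖ ^ 2 * ‖b‖ ^ 2 * D) := by
  intro z
  have hab : ‖a‖ ^ 2 * ‖b‖ ^ 2 ≠ 0 := by positivity
  rw [mem_Ssphere_mul_mul_iff, mul_eq_zero, or_iff_right hab]
  rfl
end

section
/- Let M ∈ ℍ satisfy re M = 0 and ‖M‖ = 1. Then the Cayley-type map z ↦ (z + M)⁻¹ * (z − M) is a bijection from the half-space V := {z ∈ ℍ : re(star M * z) > 0} onto the open unit ball {w ∈ ℍ : ‖w‖ < 1}, with inverse map w ↦ (M * (1 + w)) * (1 − w)⁻¹. (Paper's Example 3.32 for one quaternion variable: the pseudoconformal equivalence of the generalized upper M-semispace with the unit ball.) -/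
open scoped Quaternion
open Quaternion

/-- Paper's Example 3.32 for one quaternion variable: the Cayley-type map
`z ↦ (z + M)⁻¹ * (z − M)` is a bijection from the half-space
`{z : re(star M * z) > 0}` onto the open unit ball, with inverse
`w ↦ (M * (1 + w)) * (1 − w)⁻¹`. -/
theorem stmt_10 (M : ℍ[ℝ]) (hM1 : M.re = 0) (hM2 : ‖M‖ = 1) :
    Set.BijOn (fun z : ℍ[ℝ] => (z + M)⁻¹ * (z - M))
      {z : ℍ[ℝ] | 0 < (star M * z).re} {w : ℍ[ℝ] | ‖w‖ < 1} ∧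
    Set.InvOn (fun w : ℍ[ℝ] => (M * (1 + w)) * (1 - w)⁻¹)
      (fun z : ℍ[ℝ] => (z + M)⁻¹ * (z - M))
      {z : ℍ[ℝ] | 0 < (star M * z).re} {w : ℍ[ℝ] | ‖w‖ < 1} := by
  have hns : normSq M = 1 := by rw [normSq_eq_norm_mul_self, hM2]; norm_num
  have h2ne : (2 : ℍ[ℝ]) ≠ 0 := by
    intro h
    have := congrArg QuaternionAlgebra.re h
    rw [show (2:ℍ[ℝ]) = ((2:ℕ):ℍ[ℝ]) by norm_num, re_natCast] at this
    norm_num at this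
  have hM0 : M ≠ 0 := by intro h; rw [h] at hM2; simp at hM2
  set f := fun z : ℍ[ℝ] => (z + M)⁻¹ * (z - M) with hf
  set g := fun w : ℍ[ℝ] => (M * (1 + w)) * (1 - w)⁻¹ with hg
  -- key norm identity
  have key : ∀ z : ℍ[ℝ], normSq (z + M) - normSq (z - M) = 4 * (star M * z).re := by
    intro z
    simp only [normSq_def', Quaternion.re_add, Quaternion.imI_add, Quaternion.imJ_add,
      Quaternion.imK_add, Quaternion.re_sub, Quaternion.imI_sub, Quaternion.imJ_sub,
      Quaternion.imK_sub, Quaternion.re_mul, Quaternion.re_star, Quaternion.imI_star,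
      Quaternion.imJ_star, Quaternion.imK_star]
    ring
  have hne : ∀ z : ℍ[ℝ], 0 < (star M * z).re → z + M ≠ 0 := by
    intro z hz h
    have hzM : z = -M := by linear_combination (norm := noncomm_ring) h
    rw [hzM, mul_neg, star_mul_self, hns] at hz
    norm_num at hz
  have mtf : Set.MapsTo f {z : ℍ[ℝ] | 0 < (star M * z).re} {w : ℍ[ℝ] | ‖w‖ < 1} := by
    intro z hz
    simp only [Set.mem_setOf_eq] at hz ⊢
    have h0 : z + M ≠ 0 := hne z hz
    have hp : 0 < ‖z + M‖ := norm_pos_iff.mpr h0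
    have hlt : ‖z - M‖ < ‖z + M‖ := by
      have h1 := key z
      rw [normSq_eq_norm_mul_self, normSq_eq_norm_mul_self] at h1
      nlinarith [norm_nonneg (z - M), norm_nonneg (z + M)]
    rw [hf]
    simp only [norm_mul, norm_inv]
    rw [← div_eq_inv_mul, div_lt_one hp]
    exact hlt
  have hw1 : ∀ w : ℍ[ℝ], ‖w‖ < 1 → (1 : ℍ[ℝ]) - w ≠ 0 := by
    intro w hw h
    have : w = 1 := by linear_combination (norm := noncomm_ring) -h
    rw [this, norm_one] at hw
    exact lt_irrefl _ hw
  have mtg : Set.MapsTo g {w : ℍ[ℝ] | ‖w‖ < 1} {z : ℍ[ℝ] | 0 < (star M * z).re} := by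
    intro w hw
    simp only [Set.mem_setOf_eq] at hw ⊢
    have h0 : (1 : ℍ[ℝ]) - w ≠ 0 := hw1 w hw
    have h1 : star M * g w = (1 + w) * (1 - w)⁻¹ := by
      rw [hg]
      simp only []
      rw [← mul_assoc, ← mul_assoc, star_mul_self, hns]
      push_cast
      rw [one_mul]
    rw [h1, inv_def, mul_smul_comm, re_smul, smul_eq_mul]
    have h2 : ((1 + w) * star (1 - w)).re = 1 - normSq w := by
      simp only [Quaternion.re_mul, Quaternion.re_star, Quaternion.imI_star, Quaternion.imJ_star,
        Quaternion.imK_star, Quaternion.re_add, Quaternion.imI_add, Quaternion.imJ_add,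
        Quaternion.imK_add, Quaternion.re_sub, Quaternion.imI_sub, Quaternion.imJ_sub,
        Quaternion.imK_sub, Quaternion.re_one, Quaternion.imI_one, Quaternion.imJ_one,
        Quaternion.imK_one, normSq_def']
      ring
    rw [h2]
    have hnsw : normSq w < 1 := by
      rw [normSq_eq_norm_mul_self]
      nlinarith [norm_nonneg w]
    have hpos : 0 < normSq (1 - w) := lt_of_le_of_ne normSq_nonneg
      (Ne.symm (normSq_ne_zero.mpr h0))
    exact mul_pos (inv_pos.mpr hpos) (by linarith)
  have left : Set.LeftInvOn g f {z : ℍ[ℝ] | 0 < (star M * z).re} := by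
    intro z hz
    simp only [Set.mem_setOf_eq] at hz
    have h0 : z + M ≠ 0 := hne z hz
    set w := f z with hwdef
    have h2 : (z + M) * w = z - M := mul_inv_cancel_left₀ h0 _
    have h1mw : (z + M) * (1 - w) = 2 * M := by
      rw [mul_sub, mul_one, h2]; noncomm_ring
    have hw0 : (1 : ℍ[ℝ]) - w ≠ 0 := by
      intro h
      rw [h, mul_zero] at h1mw
      rcases mul_eq_zero.mp h1mw.symm with h' | h'
      · exact h2ne h'
      · exact hM0 h'
    show M * (1 + w) * (1 - w)⁻¹ = z
    rw [mul_inv_eq_iff_eq_mul₀ hw0]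
    have h3 : M * w = (z - M) - z * w := by
      rw [add_mul] at h2
      exact eq_sub_of_add_eq' h2
    rw [mul_add, mul_one, h3, mul_sub, mul_one]
    abel
  have right : Set.RightInvOn g f {w : ℍ[ℝ] | ‖w‖ < 1} := by
    intro w hw
    simp only [Set.mem_setOf_eq] at hw
    have hw0 : (1 : ℍ[ℝ]) - w ≠ 0 := hw1 w hw
    set z := g w with hzdef
    have hcomm : (1 - w)⁻¹ * w = w * (1 - w)⁻¹ := by
      have : Commute (1 - w) w := ((Commute.one_left w).sub_left (Commute.refl w))
      exact (this.inv_left₀).eq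
    have hzM : z + M = 2 * M * (1 - w)⁻¹ := by
      have hM' : M = M * (1 - w) * (1 - w)⁻¹ := by
        rw [mul_assoc, mul_inv_cancel₀ hw0, mul_one]
      calc z + M = M * (1 + w) * (1 - w)⁻¹ + M * (1 - w) * (1 - w)⁻¹ := by rw [← hM']
        _ = (M * (1 + w) + M * (1 - w)) * (1 - w)⁻¹ := by rw [add_mul]
        _ = 2 * M * (1 - w)⁻¹ := by congr 1; noncomm_ring
    have hzm : z - M = 2 * M * w * (1 - w)⁻¹ := by
      have hM' : M = M * (1 - w) * (1 - w)⁻¹ := by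
        rw [mul_assoc, mul_inv_cancel₀ hw0, mul_one]
      calc z - M = M * (1 + w) * (1 - w)⁻¹ - M * (1 - w) * (1 - w)⁻¹ := by rw [← hM']
        _ = (M * (1 + w) - M * (1 - w)) * (1 - w)⁻¹ := by rw [sub_mul]
        _ = 2 * M * w * (1 - w)⁻¹ := by congr 1; noncomm_ring
    have hne2 : z + M ≠ 0 := by
      rw [hzM]
      exact mul_ne_zero (mul_ne_zero h2ne hM0) (inv_ne_zero hw0)
    show (z + M)⁻¹ * (z - M) = w
    rw [inv_mul_eq_iff_eq_mul₀ hne2, hzm, hzM, mul_assoc, ← hcomm, ← mul_assoc]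
  have hinv : Set.InvOn g f {z : ℍ[ℝ] | 0 < (star M * z).re} {w : ℍ[ℝ] | ‖w‖ < 1} := ⟨left, right⟩
  exact ⟨hinv.bijOn mtf mtg, hinv⟩
end

section
/- Let a ∈ ℍ with ‖a‖ < 1 and define S_a(z) := (1 − z * star a)⁻¹ * (a − z) for z ∈ ℍ with ‖z‖ ≤ 1 (the inverse exists since ‖z * star a‖ ≤ ‖a‖ < 1). Then: (i) ‖1 − z * star a‖² − ‖a − z‖² = (1 − ‖a‖²) * (1 − ‖z‖²); hence ‖S_a(z)‖ < 1 whenever ‖z‖ < 1 and ‖S_a(z)‖ = 1 whenever ‖z‖ = 1; (ii) S_a(0) = a and S_a(a) = 0; (iii) S_a is an involution: S_a(S_a(z)) = z for every z with ‖z‖ ≤ 1. (The Möbius automorphisms of the unit ball of ℍ constructed in the proof of the paper's Theorem 3.37.) -/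
open scoped Quaternion

open Quaternion in
lemma normSq_sub' (x y : ℍ[ℝ]) :
    normSq (x - y) = normSq x + normSq y - 2 * (x * star y).re := by
  rw [sub_eq_add_neg, normSq_add, normSq_neg, star_neg, mul_neg, re_neg]
  ring

open Quaternion in
lemma norm_sq_eq (x : ℍ[ℝ]) : ‖x‖ ^ 2 = normSq x := by
  rw [sq, ← normSq_eq_norm_mul_self]

/-- The Möbius transformation `S_a` of the closed unit ball of `ℍ`. -/
noncomputable def Sa (a z : ℍ[ℝ]) : ℍ[ℝ] := (1 - z * star a)⁻¹ * (a - z)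

/-- The Möbius automorphisms of the unit ball of `ℍ` constructed in the proof of
the paper's Theorem 3.37: the fundamental identity, boundary behaviour, values at
`0` and `a`, and the involution property. -/
theorem stmt_11 (a : ℍ[ℝ]) (ha : ‖a‖ < 1) :
    (∀ z : ℍ[ℝ], ‖z‖ ≤ 1 →
      ‖1 - z * star a‖ ^ 2 - ‖a - z‖ ^ 2 = (1 - ‖a‖ ^ 2) * (1 - ‖z‖ ^ 2)) ∧
    (∀ z : ℍ[ℝ], ‖z‖ < 1 → ‖Sa a z‖ < 1) ∧
    (∀ z : ℍ[ℝ], ‖z‖ = 1 → ‖Sa a z‖ = 1) ∧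
    Sa a 0 = a ∧ Sa a a = 0 ∧
    (∀ z : ℍ[ℝ], ‖z‖ ≤ 1 → Sa a (Sa a z) = z) := by
  have key : ∀ z : ℍ[ℝ],
      ‖1 - z * star a‖ ^ 2 - ‖a - z‖ ^ 2 = (1 - ‖a‖ ^ 2) * (1 - ‖z‖ ^ 2) := by
    intro z
    have h1 : ((1 : ℍ[ℝ]) * star (z * star a)).re = (a * star z).re := by
      rw [one_mul, star_mul, star_star]
    rw [norm_sq_eq, norm_sq_eq, norm_sq_eq, norm_sq_eq, normSq_sub', normSq_sub', h1,
      map_mul, Quaternion.normSq_star, map_one]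
    ring
  have hden : ∀ z : ℍ[ℝ], ‖z‖ ≤ 1 → (1 : ℍ[ℝ]) - z * star a ≠ 0 := by
    intro z hz h
    have h2 : ‖z * star a‖ = 1 := by
      rw [sub_eq_zero] at h
      rw [← h, norm_one]
    have : ‖z * star a‖ < 1 := by
      rw [norm_mul, norm_star]
      calc ‖z‖ * ‖a‖ ≤ 1 * ‖a‖ := by
            exact mul_le_mul_of_nonneg_right hz (norm_nonneg _)
        _ < 1 := by simpa using ha
    linarith [h2]
  have hball : ∀ z : ℍ[ℝ], ‖z‖ < 1 → ‖Sa a z‖ < 1 := by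
    intro z hz
    have hd := hden z hz.le
    have hk := key z
    have hpos : 0 < (1 - ‖a‖ ^ 2) * (1 - ‖z‖ ^ 2) := by
      apply mul_pos <;> nlinarith [norm_nonneg a, norm_nonneg z]
    have hlt : ‖a - z‖ < ‖1 - z * star a‖ := by
      nlinarith [norm_nonneg (a - z), norm_nonneg (1 - z * star a)]
    rw [Sa, norm_mul, norm_inv]
    have hdn : 0 < ‖(1 : ℍ[ℝ]) - z * star a‖ := norm_pos_iff.mpr hd
    rw [inv_mul_lt_one₀ hdn]
    exact hlt
  have hbd : ∀ z : ℍ[ℝ], ‖z‖ = 1 → ‖Sa a z‖ = 1 := by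
    intro z hz
    have hd := hden z hz.le
    have hk := key z
    rw [hz] at hk
    simp only [one_pow, sub_self, mul_zero] at hk
    have heq : ‖a - z‖ = ‖1 - z * star a‖ := by
      nlinarith [norm_nonneg (a - z), norm_nonneg (1 - z * star a)]
    have hdn : 0 < ‖(1 : ℍ[ℝ]) - z * star a‖ := norm_pos_iff.mpr hd
    rw [Sa, norm_mul, norm_inv, heq, inv_mul_cancel₀ hdn.ne']
  have ha2 : (1 : ℍ[ℝ]) - a * star a ≠ 0 := hden a ha.le
  refine ⟨fun z _ => key z, hball, hbd, ?_, ?_, ?_⟩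
  · simp [Sa]
  · simp [Sa]
  · intro z hz
    have hd := hden z hz
    set u : ℍ[ℝ] := 1 - z * star a with hu
    have haa : a * star a = ((Quaternion.normSq a : ℝ) : ℍ[ℝ]) := Quaternion.self_mul_star a
    have hcomm : ∀ q : ℍ[ℝ], q * (star a * a) = (a * star a) * q := by
      intro q
      rw [Quaternion.star_mul_self, haa, ← Quaternion.coe_commutes]
    have hw1 : u * (1 - Sa a z * star a) = 1 - a * star a := by
      rw [Sa, ← hu, mul_sub, mul_one, ← mul_assoc, ← mul_assoc, mul_inv_cancel₀ hd, one_mul, hu]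
      noncomm_ring
    have hw2 : u * (a - Sa a z) = (1 - a * star a) * z := by
      rw [Sa, ← hu, mul_sub, ← mul_assoc, mul_inv_cancel₀ hd, one_mul, hu]
      rw [sub_mul, one_mul, sub_mul, one_mul, mul_assoc, hcomm z]
      abel
    have hw1' : (1 : ℍ[ℝ]) - Sa a z * star a = u⁻¹ * (1 - a * star a) := by
      rw [← hw1, ← mul_assoc, inv_mul_cancel₀ hd, one_mul]
    have hw2' : a - Sa a z = u⁻¹ * ((1 - a * star a) * z) := by
      rw [← hw2, ← mul_assoc, inv_mul_cancel₀ hd, one_mul]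
    rw [Sa, hw1', hw2', mul_inv_rev, inv_inv, mul_assoc, ← mul_assoc u,
      mul_inv_cancel₀ hd, one_mul, ← mul_assoc, inv_mul_cancel₀ ha2, one_mul]
end
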